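/- (Finite termination of the proximal point algorithm.) Let X ⊆ ℝⁿ be nonempty closed convex, ψ_a : X × X → ℝ with ψ_a(x,x) = 0 and ψ_a(·,y) convex for each y, let X* = {x* ∈ X : ψ_a(x*,y) ≤ 0 ∀y ∈ X} be nonempty closed convex, assume ψ_a(x,x*) ≥ 0 for all x ∈ X, x* ∈ X*, and assume ψ_a is linearly conditioned: there is γ > 0 with ψ_a(x, P_{X*}(x)) ≥ γ d(x, X*) for all x ∈ X. Let {x_k} satisfy ψ_a(x_{k+1}, z) ≤ (1/r_k)⟨z − x_{k+1}, x_{k+1} − x_k⟩ for all z ∈ X, with r_k > 0 and liminf r_k = r > 0. Then there exists k₀ ∈ ℕ such that x_k ∈ X* for all k > k₀. -/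

import Mathlib

/-!
Testing the proximal inequality with a point `c ∈ X*` and using `ψ(x_{k+1}, c) ≥ 0` gives
`⟪c - x_{k+1}, x_{k+1} - x_k⟫ ≥ 0`, so `‖x_k - c‖²` decreases by at least `‖x_{k+1} - x_k‖²` at
each step and the steps tend to `0`. Since `liminf r_k > 0`, also `r_k⁻¹ ‖x_{k+1} - x_k‖ → 0`.
Once this is below `γ`, testing the proximal inequality with `p = P_{X*}(x_{k+1})` and using
linear conditioning gives `γ ‖p - x_{k+1}‖ ≤ r_k⁻¹ ‖p - x_{k+1}‖ ‖x_{k+1} - x_k‖`, forcing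
`x_{k+1} = p ∈ X*`.
-/

open Filter Topology

section InnerProductSpace

variable {E : Type*} [NormedAddCommGroup E] [InnerProductSpace ℝ E]

theorem norm_sub_sq_le_of_inner_nonneg {x y c : E} (h : 0 ≤ inner ℝ (c - y) (y - x)) :
    ‖y - x‖ ^ 2 ≤ ‖x - c‖ ^ 2 - ‖y - c‖ ^ 2 := by
  have hsplit : ‖x - c‖ ^ 2 = ‖y - x‖ ^ 2 + 2 * inner ℝ (c - y) (y - x) + ‖y - c‖ ^ 2 := by
    rw [show x - c = -(y - x) + -(c - y) by abel, norm_add_sq_real, inner_neg_neg,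
      real_inner_comm, norm_neg, norm_neg, norm_sub_rev c y]
  linarith

theorem tendsto_norm_succ_sub_of_inner_nonneg {x : ℕ → E} {c : E}
    (h : ∀ k, 0 ≤ inner ℝ (c - x (k + 1)) (x (k + 1) - x k)) :
    Tendsto (fun k => ‖x (k + 1) - x k‖) atTop (𝓝 0) := by
  have hsum : Summable fun k => ‖x (k + 1) - x k‖ ^ 2 := by
    refine summable_of_sum_range_le (c := ‖x 0 - c‖ ^ 2) (fun _ => sq_nonneg _) fun N => ?_
    calc ∑ k ∈ Finset.range N, ‖x (k + 1) - x k‖ ^ 2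
        ≤ ∑ k ∈ Finset.range N, (‖x k - c‖ ^ 2 - ‖x (k + 1) - c‖ ^ 2) :=
          Finset.sum_le_sum fun k _ => norm_sub_sq_le_of_inner_nonneg (h k)
      _ = ‖x 0 - c‖ ^ 2 - ‖x N - c‖ ^ 2 := Finset.sum_range_sub' (fun k => ‖x k - c‖ ^ 2) N
      _ ≤ ‖x 0 - c‖ ^ 2 := sub_le_self _ (sq_nonneg _)
  simpa using hsum.tendsto_atTop_zero.sqrt

theorem eq_of_mul_norm_le_mul_inner {j p y : E} {t γ : ℝ} (ht : 0 ≤ t)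
    (hcond : γ * ‖p - j‖ ≤ t * inner ℝ (p - j) (j - y)) (hstep : t * ‖j - y‖ < γ) : p = j := by
  by_contra hne
  have hpos : 0 < ‖p - j‖ := norm_pos_iff.mpr (sub_ne_zero.mpr hne)
  have hcs := mul_le_mul_of_nonneg_left (real_inner_le_norm (p - j) (j - y)) ht
  nlinarith [mul_lt_mul_of_pos_left hstep hpos]

end InnerProductSpace

theorem tendsto_inv_mul_of_liminf_pos {r u : ℕ → ℝ} (hr : ∀ k, 0 < r k)
    (hlim : 0 < atTop.liminf r) (hu : Tendsto u atTop (𝓝 0)) :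
    Tendsto (fun k => (r k)⁻¹ * u k) atTop (𝓝 0) := by
  set ρ := atTop.liminf r
  have hbelow : ∀ᶠ k in atTop, ρ / 2 < r k :=
    eventually_lt_of_lt_liminf (by linarith)
      ⟨0, eventually_map.mpr (Eventually.of_forall fun k => (hr k).le)⟩
  refine isBoundedUnder_le_mul_tendsto_zero ⟨(ρ / 2)⁻¹, eventually_map.mpr ?_⟩ hu
  filter_upwards [hbelow] with k hk
  rw [Function.comp_apply, norm_inv, Real.norm_of_nonneg (hr k).le]
  exact inv_anti₀ (by positivity) hk.le

theorem stmt13_general {n : ℕ} (X : Set (EuclideanSpace ℝ (Fin n)))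
    (ψ : EuclideanSpace ℝ (Fin n) → EuclideanSpace ℝ (Fin n) → ℝ)
    (Xs : Set (EuclideanSpace ℝ (Fin n)))
    (hXs : Xs = {xs | xs ∈ X ∧ ∀ y ∈ X, ψ xs y ≤ 0})
    (hXsne : Xs.Nonempty)
    (hpm : ∀ x ∈ X, ∀ xs ∈ Xs, 0 ≤ ψ x xs)
    (proj : EuclideanSpace ℝ (Fin n) → EuclideanSpace ℝ (Fin n))
    (hproj : ∀ x, proj x ∈ Xs ∧ ∀ w ∈ Xs, dist x (proj x) ≤ dist x w)
    (γ : ℝ) (hγ : 0 < γ)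
    (hlin : ∀ x ∈ X, γ * Metric.infDist x Xs ≤ ψ x (proj x))
    (x : ℕ → EuclideanSpace ℝ (Fin n)) (hxX : ∀ k, x k ∈ X)
    (r : ℕ → ℝ) (hr : ∀ k, 0 < r k) (rlim : ℝ) (hrlim : 0 < rlim)
    (hliminf : Filter.atTop.liminf r = rlim)
    (hiter : ∀ k, ∀ z ∈ X,
      ψ (x (k + 1)) z ≤ (1 / r k) * (inner ℝ (z - x (k + 1)) (x (k + 1) - x k) : ℝ)) :
    ∃ k₀ : ℕ, ∀ k > k₀, x k ∈ Xs := by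
  simp only [one_div] at hiter
  have hXsX : Xs ⊆ X := by rw [hXs]; exact fun _ h => h.1
  obtain ⟨c, hc⟩ := hXsne
  have hfejer : ∀ k, 0 ≤ inner ℝ (c - x (k + 1)) (x (k + 1) - x k) := fun k =>
    nonneg_of_mul_nonneg_right ((hpm _ (hxX _) c hc).trans (hiter k c (hXsX hc)))
      (inv_pos.mpr (hr k))
  have hsteps := tendsto_inv_mul_of_liminf_pos hr (hliminf ▸ hrlim)
    (tendsto_norm_succ_sub_of_inner_nonneg hfejer)
  obtain ⟨N, hN⟩ := eventually_atTop.mp (hsteps.eventually_lt_const hγ)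
  refine ⟨N, fun k hk => ?_⟩
  obtain ⟨m, rfl⟩ := Nat.exists_eq_add_of_lt hk
  set j := x (N + m + 1)
  have hdist : ‖proj j - j‖ ≤ Metric.infDist j Xs := by
    rw [← dist_eq_norm', Metric.le_infDist ⟨c, hc⟩]
    exact fun w hw => (hproj j).2 w hw
  have hfixed : proj j = j :=
    eq_of_mul_norm_le_mul_inner (inv_pos.mpr (hr _)).le
      (((mul_le_mul_of_nonneg_left hdist hγ.le).trans (hlin j (hxX _))).trans
        (hiter _ _ (hXsX (hproj j).1)))
      (hN _ (by omega))
  exact hfixed ▸ (hproj j).1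

theorem stmt13 {n : ℕ} (X : Set (EuclideanSpace ℝ (Fin n)))
    (hXne : X.Nonempty) (hXcl : IsClosed X) (hXconv : Convex ℝ X)
    (ψ : EuclideanSpace ℝ (Fin n) → EuclideanSpace ℝ (Fin n) → ℝ)
    (hdiag : ∀ x ∈ X, ψ x x = 0)
    (hψconv : ∀ y ∈ X, ConvexOn ℝ X (fun x => ψ x y))
    (Xs : Set (EuclideanSpace ℝ (Fin n)))
    (hXs : Xs = {xs | xs ∈ X ∧ ∀ y ∈ X, ψ xs y ≤ 0})
    (hXsne : Xs.Nonempty) (hXscl : IsClosed Xs) (hXsconv : Convex ℝ Xs)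
    (hpm : ∀ x ∈ X, ∀ xs ∈ Xs, 0 ≤ ψ x xs)
    (proj : EuclideanSpace ℝ (Fin n) → EuclideanSpace ℝ (Fin n))
    (hproj : ∀ x, proj x ∈ Xs ∧ ∀ w ∈ Xs, dist x (proj x) ≤ dist x w)
    (γ : ℝ) (hγ : 0 < γ)
    (hlin : ∀ x ∈ X, γ * Metric.infDist x Xs ≤ ψ x (proj x))
    (x : ℕ → EuclideanSpace ℝ (Fin n)) (hxX : ∀ k, x k ∈ X)
    (r : ℕ → ℝ) (hr : ∀ k, 0 < r k) (rlim : ℝ) (hrlim : 0 < rlim)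
    (hliminf : Filter.atTop.liminf r = rlim)
    (hiter : ∀ k, ∀ z ∈ X,
      ψ (x (k + 1)) z ≤ (1 / r k) * (inner ℝ (z - x (k + 1)) (x (k + 1) - x k) : ℝ)) :
    ∃ k₀ : ℕ, ∀ k > k₀, x k ∈ Xs :=
  stmt13_general X ψ Xs hXs hXsne hpm proj hproj γ hγ hlin x hxX r hr rlim hrlim hliminf hiter
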